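/- arXiv:1009.2221 — 4 statements merged into one kernel-verified Lean document; each statement's English description precedes it below -/
import Mathlib

section
/- Let H be a separable real Hilbert space, (Ω, F, P) a probability space, u : Ω → H a random variable with E‖u‖² < ∞, and v : Ω → ℝᴷ a random vector whose matrix J with entries Jᵢⱼ = E[vᵢ vⱼ] is finite and invertible. Suppose D : ℝᴷ → H is a bounded linear map satisfying ⟨φ, D w⟩ = E[⟨φ, u⟩ ⟨v, w⟩] for all φ ∈ H and w ∈ ℝᴷ. Then E‖u‖² ≥ Tr(M J⁻¹), where M is the K×K Gram matrix with entries Mᵢⱼ = ⟨D eᵢ, D eⱼ⟩. -/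
open scoped InnerProductSpace
open MeasureTheory Matrix

/-!
Put `A = J⁻¹` and `h ω = ∑ᵢ vᵢ(ω) • ψᵢ` with `ψᵢ = ∑ⱼ Aᵢⱼ • D eⱼ`, a best linear predictor of `u`
from `v`. Integrating the pointwise bound `‖u‖² ≥ 2⟪h, u⟫ - ‖h‖²` gives
`E‖u‖² ≥ 2 E⟪h, u⟫ - E‖h‖²`; the identity defining `D` evaluates `E⟪h, u⟫ = Tr(A M)` and the
moment matrix evaluates `E‖h‖² = Tr(J A M A) = Tr(A M)`, so the bound is `Tr(M J⁻¹)`.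
-/

theorem map_eq_zero_of_eq_zero_off {M N F : Type*} [AddCommGroup M] [AddGroup N] [FunLike F M N]
    [AddMonoidHomClass F M N] {f : F} {p : M → Prop} (hp : ∀ x y, p x → p y → p (x - y))
    {x₀ : M} (hx₀ : ¬ p x₀) (hf : ∀ x, ¬ p x → f x = 0) (x : M) : f x = 0 := by
  by_cases hx : p x
  · have hxx₀ : ¬ p (x + x₀) := fun h => hx₀ (by simpa only [add_sub_cancel_left] using hp _ _ h hx)
    rw [← add_sub_cancel_right x x₀, map_sub, hf _ hxx₀, hf _ hx₀, sub_zero]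
  · exact hf x hx

theorem gram_real_sum_smul {ι H : Type*} [Fintype ι] [NormedAddCommGroup H]
    [InnerProductSpace ℝ H] (C : Matrix ι ι ℝ) (φ : ι → H) :
    gram ℝ (fun i => ∑ j, C i j • φ j) = C * gram ℝ φ * Cᵀ := by
  ext i l
  simp only [gram_apply, sum_inner, inner_sum, real_inner_smul_left, real_inner_smul_right,
    mul_apply, transpose_apply, Finset.sum_mul]
  exact Finset.sum_congr rfl fun _ _ => Finset.sum_congr rfl fun _ _ => by ring

theorem sum_inner_sum_smul_eq_trace {ι H : Type*} [Fintype ι] [NormedAddCommGroup H]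
    [InnerProductSpace ℝ H] (C : Matrix ι ι ℝ) (φ : ι → H) :
    ∑ i, ⟪∑ j, C i j • φ j, φ i⟫_ℝ = trace (C * gram ℝ φ) := by
  simp [trace, mul_apply, sum_inner, real_inner_smul_left, gram_apply]

theorem norm_sq_sum_smul {ι H : Type*} [Fintype ι] [NormedAddCommGroup H]
    [InnerProductSpace ℝ H] (c : ι → ℝ) (ψ : ι → H) :
    ‖∑ i, c i • ψ i‖ ^ 2 = ∑ i, ∑ j, c i * c j * ⟪ψ i, ψ j⟫_ℝ := by
  rw [← real_inner_self_eq_norm_sq, sum_inner]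
  simp only [inner_sum, real_inner_smul_left, real_inner_smul_right]
  exact Finset.sum_congr rfl fun _ _ => Finset.sum_congr rfl fun _ _ => by ring

section Moments

variable {ι H Ω : Type*} [Fintype ι] [NormedAddCommGroup H] [InnerProductSpace ℝ H]
  [MeasurableSpace Ω] {P : Measure Ω}

theorem integrable_inner_mul_of_sq {u : Ω → H} {f : Ω → ℝ}
    (hu : Integrable (fun ω => ‖u ω‖ ^ 2) P) (hf : Integrable (fun ω => f ω ^ 2) P) (φ : H)
    (hm : AEStronglyMeasurable (fun ω => ⟪φ, u ω⟫_ℝ * f ω) P) :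
    Integrable (fun ω => ⟪φ, u ω⟫_ℝ * f ω) P := by
  refine Integrable.mono' (((hu.const_mul (‖φ‖ ^ 2)).add hf).div_const 2) hm
    (Filter.Eventually.of_forall fun ω => ?_)
  have hcs : |⟪φ, u ω⟫_ℝ| ≤ ‖φ‖ * ‖u ω‖ := abs_real_inner_le_norm _ _
  rw [Real.norm_eq_abs, abs_mul, Pi.add_apply]
  nlinarith [two_mul_le_add_sq |⟪φ, u ω⟫_ℝ| |f ω|, sq_abs (f ω),
    mul_self_le_mul_self (abs_nonneg _) hcs]

variable {v : Ω → ι → ℝ}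

theorem integrable_norm_sq_sum_smul (hv : ∀ i j, Integrable (fun ω => v ω i * v ω j) P)
    (ψ : ι → H) : Integrable (fun ω => ‖∑ i, v ω i • ψ i‖ ^ 2) P := by
  simp only [norm_sq_sum_smul]
  exact integrable_finsetSum _ fun i _ => integrable_finsetSum _ fun j _ =>
    (hv i j).mul_const _

theorem integral_norm_sq_sum_smul (hv : ∀ i j, Integrable (fun ω => v ω i * v ω j) P)
    (ψ : ι → H) :
    ∫ ω, ‖∑ i, v ω i • ψ i‖ ^ 2 ∂P =
      trace ((Matrix.of fun i j => ∫ ω, v ω i * v ω j ∂P) * gram ℝ ψ) := by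
  simp only [norm_sq_sum_smul]
  rw [integral_finsetSum _ fun i _ => integrable_finsetSum _ fun j _ => (hv i j).mul_const _]
  refine Finset.sum_congr rfl fun i _ => ?_
  rw [integral_finsetSum _ fun j _ => (hv i j).mul_const _]
  simp [mul_apply, integral_mul_const, gram_apply, real_inner_comm]

theorem two_mul_sum_inner_sub_trace_le_integral_norm_sq {u : Ω → H}
    (hu : Integrable (fun ω => ‖u ω‖ ^ 2) P) (hv : ∀ i j, Integrable (fun ω => v ω i * v ω j) P)
    {φ : ι → H} (hpair_int : ∀ ψ i, Integrable (fun ω => ⟪ψ, u ω⟫_ℝ * v ω i) P)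
    (hφ : ∀ ψ i, ⟪ψ, φ i⟫_ℝ = ∫ ω, ⟪ψ, u ω⟫_ℝ * v ω i ∂P) (ψ : ι → H) :
    2 * ∑ i, ⟪ψ i, φ i⟫_ℝ - trace ((Matrix.of fun i j => ∫ ω, v ω i * v ω j ∂P) * gram ℝ ψ) ≤
      ∫ ω, ‖u ω‖ ^ 2 ∂P := by
  have hcross : ∀ ω, ⟪∑ i, v ω i • ψ i, u ω⟫_ℝ = ∑ i, ⟪ψ i, u ω⟫_ℝ * v ω i := fun ω => by
    simp only [sum_inner, real_inner_smul_left, mul_comm]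
  have hcross_int : Integrable (fun ω => ⟪∑ i, v ω i • ψ i, u ω⟫_ℝ) P := by
    simp only [hcross]
    exact integrable_finsetSum _ fun i _ => hpair_int (ψ i) i
  have hcross_eq : ∫ ω, ⟪∑ i, v ω i • ψ i, u ω⟫_ℝ ∂P = ∑ i, ⟪ψ i, φ i⟫_ℝ := by
    simp only [hcross, hφ]
    exact integral_finsetSum _ fun i _ => hpair_int (ψ i) i
  have hpt : ∀ ω, 2 * ⟪∑ i, v ω i • ψ i, u ω⟫_ℝ - ‖∑ i, v ω i • ψ i‖ ^ 2 ≤ ‖u ω‖ ^ 2 :=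
    fun ω => by nlinarith [norm_sub_sq_real (∑ i, v ω i • ψ i) (u ω)]
  calc _ = ∫ ω, (2 * ⟪∑ i, v ω i • ψ i, u ω⟫_ℝ - ‖∑ i, v ω i • ψ i‖ ^ 2) ∂P := by
        rw [integral_sub (hcross_int.const_mul 2) (integrable_norm_sq_sum_smul hv ψ),
          integral_const_mul, hcross_eq, integral_norm_sq_sum_smul hv ψ]
    _ ≤ ∫ ω, ‖u ω‖ ^ 2 ∂P :=
      integral_mono ((hcross_int.const_mul 2).sub (integrable_norm_sq_sum_smul hv ψ)) hu hpt

end Moments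

/-- Nothing makes `u` measurable, but a pairing that is not a.e. measurable has junk integral `0`,
and the bilinearity of the pairings spreads this to `D = 0`. -/
theorem aestronglyMeasurable_inner_mul_inner_of_ne_zero {H E Ω : Type*} [NormedAddCommGroup H]
    [InnerProductSpace ℝ H] [NormedAddCommGroup E] [InnerProductSpace ℝ E] [MeasurableSpace Ω]
    {P : Measure Ω} {u : Ω → H} {v : Ω → E} {D : E →L[ℝ] H}
    (hD : ∀ φ w, ⟪φ, D w⟫_ℝ = ∫ ω, ⟪φ, u ω⟫_ℝ * ⟪v ω, w⟫_ℝ ∂P) (hD0 : D ≠ 0) (φ : H) (w : E) :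
    AEStronglyMeasurable (fun ω => ⟪φ, u ω⟫_ℝ * ⟪v ω, w⟫_ℝ) P := by
  set p : H → E → Prop := fun φ w => AEStronglyMeasurable (fun ω => ⟪φ, u ω⟫_ℝ * ⟪v ω, w⟫_ℝ) P
  have hsub_left : ∀ w φ φ', p φ w → p φ' w → p (φ - φ') w := fun w φ φ' h h' => by
    simp only [p, inner_sub_left, sub_mul]
    exact h.sub h'
  have hsub_right : ∀ φ w w', p φ w → p φ w' → p φ (w - w') := fun φ w w' h h' => by
    simp only [p, inner_sub_right, mul_sub]
    exact h.sub h'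
  have hinner : ∀ φ w, ¬ p φ w → ⟪D w, φ⟫_ℝ = 0 := fun φ w h => by
    rw [real_inner_comm, hD]
    exact integral_undef fun hi => h hi.aestronglyMeasurable
  have hDw : ∀ w, ¬ p φ w → D w = 0 := fun w hw => ext_inner_right ℝ fun φ' => by
    rw [inner_zero_left]
    exact map_eq_zero_of_eq_zero_off (f := innerSL ℝ (D w)) (hsub_left w) hw (hinner · w) φ'
  by_contra h
  exact hD0 (ContinuousLinearMap.ext (map_eq_zero_of_eq_zero_off (hsub_right φ) h hDw))

theorem trace_covariance_bound_general
    {K : ℕ} {H : Type*} [NormedAddCommGroup H] [InnerProductSpace ℝ H]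
    {Ω : Type*} [MeasurableSpace Ω] (P : Measure Ω)
    (u : Ω → H) (hu : Integrable (fun ω => ‖u ω‖ ^ 2) P)
    (v : Ω → EuclideanSpace ℝ (Fin K))
    (hv_int : ∀ i j : Fin K, Integrable (fun ω => v ω i * v ω j) P)
    (hJ_inv : IsUnit (Matrix.of fun i j : Fin K => ∫ ω, v ω i * v ω j ∂P).det)
    (D : EuclideanSpace ℝ (Fin K) →L[ℝ] H)
    (hD : ∀ (φ : H) (w : EuclideanSpace ℝ (Fin K)),
      ⟪φ, D w⟫_ℝ = ∫ ω, ⟪φ, u ω⟫_ℝ * ⟪v ω, w⟫_ℝ ∂P) :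
    Matrix.trace
        ((Matrix.of fun i j : Fin K =>
            ⟪D (EuclideanSpace.single i (1 : ℝ)), D (EuclideanSpace.single j (1 : ℝ))⟫_ℝ) *
          (Matrix.of fun i j : Fin K => ∫ ω, v ω i * v ω j ∂P)⁻¹) ≤
      ∫ ω, ‖u ω‖ ^ 2 ∂P := by
  set J := Matrix.of fun i j : Fin K => ∫ ω, v ω i * v ω j ∂P
  set e : Fin K → EuclideanSpace ℝ (Fin K) := fun i => EuclideanSpace.single i 1
  change trace (gram ℝ (fun i => D (e i)) * J⁻¹) ≤ _
  obtain rfl | hD0 := eq_or_ne D 0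
  · simpa [← Pi.zero_def] using integral_nonneg fun ω => sq_nonneg ‖u ω‖
  have hpair_int : ∀ (ψ : H) i, Integrable (fun ω => ⟪ψ, u ω⟫_ℝ * v ω i) P := fun ψ i => by
    have hm := aestronglyMeasurable_inner_mul_inner_of_ne_zero hD hD0 ψ (e i)
    simp only [e, EuclideanSpace.inner_single_right, one_mul, conj_trivial] at hm
    exact integrable_inner_mul_of_sq hu (by simpa only [sq] using hv_int i i) ψ hm
  have hφ : ∀ (ψ : H) i, ⟪ψ, D (e i)⟫_ℝ = ∫ ω, ⟪ψ, u ω⟫_ℝ * v ω i ∂P := fun ψ i => by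
    simpa only [e, EuclideanSpace.inner_single_right, one_mul, conj_trivial] using hD ψ (e i)
  have hbound := two_mul_sum_inner_sub_trace_le_integral_norm_sq (v := fun ω => (v ω).ofLp)
    hu hv_int hpair_int hφ (fun i => ∑ j, J⁻¹ i j • D (e j))
  have hJ_symm : J⁻¹ᵀ = J⁻¹ := (IsSymm.ext fun i j => by simp only [J, of_apply, mul_comm]).inv
  rw [sum_inner_sum_smul_eq_trace, gram_real_sum_smul, hJ_symm, ← Matrix.mul_assoc,
    ← Matrix.mul_assoc, mul_nonsing_inv _ hJ_inv, Matrix.one_mul, trace_mul_comm J⁻¹] at hbound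
  linarith

/-- Trace form of the covariance Cauchy–Schwarz inequality: if `u` is a
square-integrable `H`-valued random variable, `v` an `ℝᴷ`-valued random vector with finite
invertible second-moment matrix `J`, and `D : ℝᴷ → H` a bounded linear map satisfying
`⟨φ, D w⟩ = E[⟨φ, u⟩⟨v, w⟩]`, then `E‖u‖² ≥ Tr(M J⁻¹)` where `Mᵢⱼ = ⟨D eᵢ, D eⱼ⟩`. -/
theorem trace_covariance_bound
    {K : ℕ} {H : Type*} [NormedAddCommGroup H] [InnerProductSpace ℝ H]
    [CompleteSpace H] [TopologicalSpace.SeparableSpace H]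
    {Ω : Type*} [MeasurableSpace Ω] (P : Measure Ω) [IsProbabilityMeasure P]
    (u : Ω → H) (hu : Integrable (fun ω => ‖u ω‖ ^ 2) P)
    (v : Ω → EuclideanSpace ℝ (Fin K))
    (hv_int : ∀ i j : Fin K, Integrable (fun ω => v ω i * v ω j) P)
    (hJ_inv : IsUnit (Matrix.of fun i j : Fin K => ∫ ω, v ω i * v ω j ∂P).det)
    (D : EuclideanSpace ℝ (Fin K) →L[ℝ] H)
    (hD : ∀ (φ : H) (w : EuclideanSpace ℝ (Fin K)),
      ⟪φ, D w⟫_ℝ = ∫ ω, ⟪φ, u ω⟫_ℝ * ⟪v ω, w⟫_ℝ ∂P) :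
    Matrix.trace
        ((Matrix.of fun i j : Fin K =>
            ⟪D (EuclideanSpace.single i (1 : ℝ)), D (EuclideanSpace.single j (1 : ℝ))⟫_ℝ) *
          (Matrix.of fun i j : Fin K => ∫ ω, v ω i * v ω j ∂P)⁻¹) ≤
      ∫ ω, ‖u ω‖ ^ 2 ∂P :=
  trace_covariance_bound_general P u hu v hv_int hJ_inv D hD
end

section
/- Let H be a real Hilbert space, let s₁, …, s_N ∈ H with associated set transformation S : ℝᴺ → H, and let D : ℝᴷ → H be an injective bounded linear map. Let σ_c², σ_d² ≥ 0 be such that the N×N matrix Γ := σ_c² S*S + σ_d² I_N is positive definite, where (S*S)ᵢⱼ = ⟨sⱼ, sᵢ⟩. If the range of D intersects the orthogonal complement of span{s₁, …, s_N} only in {0}, then the K×K matrix J := (S*D)ᵀ Γ⁻¹ (S*D) is invertible, where S*D is the N×K matrix with entries (S*D)ₙₖ = ⟨D eₖ, sₙ⟩. -/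
/-!
Write `M` for the matrix `S*D`. Its action on coordinates is `M x = (⟪D x, sₙ⟫)ₙ`, so `M x = 0`
says that `D x` is orthogonal to every `sₙ`; the range hypothesis then forces `D x = 0`, and
injectivity of `D` gives `x = 0`. Hence `M` is injective, and since `Γ⁻¹` is positive definite,
so is `J = Mᵀ Γ⁻¹ M`, which is therefore invertible.
-/

open scoped InnerProductSpace Matrix

theorem Submodule.mem_orthogonal_span_range_iff {𝕜 E ι : Type*} [RCLike 𝕜]
    [NormedAddCommGroup E] [InnerProductSpace 𝕜 E] (v : ι → E) (x : E) :
    x ∈ (Submodule.span 𝕜 (Set.range v))ᗮ ↔ ∀ i, ⟪v i, x⟫_𝕜 = 0 := by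
  simp only [Submodule.span_range_eq_iSup, ← Submodule.iInf_orthogonal, Submodule.mem_iInf,
    Submodule.mem_orthogonal_singleton_iff_inner_right]

section

variable {H ι κ : Type*} [NormedAddCommGroup H] [InnerProductSpace ℝ H] [Fintype κ]
  [DecidableEq κ]

theorem mulVec_of_inner_apply_single (D : EuclideanSpace ℝ κ →ₗ[ℝ] H) (s : ι → H)
    (x : κ → ℝ) :
    (Matrix.of fun (i : ι) (k : κ) => ⟪D (EuclideanSpace.single k (1 : ℝ)), s i⟫_ℝ) *ᵥ x =
      fun i => ⟪D (WithLp.toLp 2 x), s i⟫_ℝ := by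
  ext i
  conv_rhs => rw [← (EuclideanSpace.basisFun κ ℝ).sum_repr (WithLp.toLp 2 x)]
  simp [Matrix.mulVec, dotProduct, sum_inner, inner_smul_left, mul_comm]

theorem injective_mulVec_of_inner_apply_single {D : EuclideanSpace ℝ κ →ₗ[ℝ] H}
    (hD : Function.Injective D) {s : ι → H}
    (hrange : ∀ x : H, x ∈ Set.range D → x ∈ (Submodule.span ℝ (Set.range s))ᗮ → x = 0) :
    Function.Injective
      (Matrix.of fun (i : ι) (k : κ) => ⟪D (EuclideanSpace.single k (1 : ℝ)), s i⟫_ℝ).mulVec := by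
  refine (injective_iff_map_eq_zero (Matrix.mulVecLin _)).2 fun x hx => ?_
  have hDx : D (WithLp.toLp 2 x) = 0 := by
    refine hrange _ ⟨_, rfl⟩ ((Submodule.mem_orthogonal_span_range_iff s _).2 fun i => ?_)
    rw [real_inner_comm]
    simpa [mulVec_of_inner_apply_single] using congrFun hx i
  exact WithLp.toLp_injective 2 (hD (hDx.trans D.map_zero.symm))

end

/-- With sampling kernels `s₁,…,s_N` in a real Hilbert space, an injective
bounded linear map `D : ℝᴷ → H`, and a positive definite noise covariance
`Γ = σ_c² S*S + σ_d² I`, if the range of `D` meets `(span{s₁,…,s_N})ᗮ` only at `0`, then the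
Fisher information matrix `J = (S*D)ᵀ Γ⁻¹ (S*D)` is invertible. -/
theorem sampled_fisher_information_invertible
    {H : Type*} [NormedAddCommGroup H] [InnerProductSpace ℝ H]
    {N K : ℕ} (s : Fin N → H)
    (D : EuclideanSpace ℝ (Fin K) →L[ℝ] H) (hD : Function.Injective D)
    (σc σd : ℝ)
    (hΓ : (σc ^ 2 • (Matrix.of fun i j : Fin N => ⟪s j, s i⟫_ℝ) +
            σd ^ 2 • (1 : Matrix (Fin N) (Fin N) ℝ)).PosDef)
    (hrange : ∀ x : H, x ∈ Set.range D →
      x ∈ (Submodule.span ℝ (Set.range s))ᗮ → x = 0) :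
    IsUnit
      ((Matrix.of fun (n : Fin N) (k : Fin K) =>
            ⟪D (EuclideanSpace.single k (1 : ℝ)), s n⟫_ℝ)ᵀ *
          (σc ^ 2 • (Matrix.of fun i j : Fin N => ⟪s j, s i⟫_ℝ) +
            σd ^ 2 • (1 : Matrix (Fin N) (Fin N) ℝ))⁻¹ *
          (Matrix.of fun (n : Fin N) (k : Fin K) =>
            ⟪D (EuclideanSpace.single k (1 : ℝ)), s n⟫_ℝ)).det := by
  have hSD := injective_mulVec_of_inner_apply_single (D := D.toLinearMap) hD hrange
  have hJ := hΓ.inv.conjTranspose_mul_mul_same hSD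
  rw [Matrix.conjTranspose_eq_transpose_of_trivial] at hJ
  exact (Matrix.isUnit_iff_isUnit_det _).1 hJ.isUnit
end

section
/- Let H be a real Hilbert space, let g₁, …, g_K ∈ H and s₁, …, s_K ∈ H with set transformations G and S respectively, and suppose the K×K matrix S*G with entries (S*G)ₙₖ = ⟨gₖ, sₙ⟩ is invertible. Let (Ω, F, P) be a probability space, σ > 0, and let n : Ω → ℝᴷ be a random vector with E[nᵢ nⱼ] = σ² (S*S)ᵢⱼ for all i, j. Then E‖G (S*G)⁻¹ n‖² = σ² Tr((S*S)(G*S)⁻¹(G*G)(S*G)⁻¹). In particular, if sₖ = gₖ for all k, this quantity equals K σ². -/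
open scoped InnerProductSpace Matrix
open MeasureTheory

/-- The cross Gram matrix of two `K`-tuples of vectors: `(gramM s g)ₙₖ = ⟪gₖ, sₙ⟫`.
Thus `gramM s g` plays the role of `S*G`, `gramM s s` of `S*S`, etc. -/
noncomputable def gramM {H : Type*} [NormedAddCommGroup H] [InnerProductSpace ℝ H]
    {K : ℕ} (s g : Fin K → H) : Matrix (Fin K) (Fin K) ℝ :=
  Matrix.of fun n k : Fin K => ⟪g k, s n⟫_ℝ

/-!
The squared norm of `G w` is the quadratic form `wᵀ (G*G) w`; with `w = (S*G)⁻¹ n` it becomes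
`nᵀ B n` for `B = (G*S)⁻¹ (G*G) (S*G)⁻¹`. Taking expectations term by term replaces `nᵢ nⱼ` by
`σ² (S*S)ᵢⱼ`, which sums to `σ² Tr((S*S) Bᵀ) = σ² Tr((S*S) B)`. When `s = g` the product inside
the trace telescopes to the identity.
-/

section Gram

variable {H : Type*} [NormedAddCommGroup H] [InnerProductSpace ℝ H] {K : ℕ}

theorem gramM_transpose (s g : Fin K → H) : (gramM s g)ᵀ = gramM g s := by
  ext i j
  exact real_inner_comm _ _

theorem norm_sum_smul_sq (g : Fin K → H) (w : Fin K → ℝ) :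
    ‖∑ k, w k • g k‖ ^ 2 = w ⬝ᵥ (gramM g g *ᵥ w) := by
  rw [← real_inner_self_eq_norm_sq]
  simp only [sum_inner, inner_sum, real_inner_smul_left, real_inner_smul_right, dotProduct,
    Matrix.mulVec, gramM, Matrix.of_apply, Finset.mul_sum]
  refine Finset.sum_congr rfl fun k _ => Finset.sum_congr rfl fun l _ => ?_
  ring

end Gram

theorem Matrix.mulVec_dotProduct_mulVec_mulVec {ι : Type*} [Fintype ι] {R : Type*} [CommSemiring R]
    (A G : Matrix ι ι R) (v : ι → R) :
    A *ᵥ v ⬝ᵥ (G *ᵥ (A *ᵥ v)) = v ⬝ᵥ ((Aᵀ * G * A) *ᵥ v) := by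
  rw [← Matrix.mulVec_mulVec, ← Matrix.mulVec_mulVec, Matrix.dotProduct_mulVec v Aᵀ,
    Matrix.vecMul_transpose]

theorem integral_dotProduct_mulVec {ι Ω : Type*} [Fintype ι] [MeasurableSpace Ω]
    (P : Measure Ω) (n : Ω → ι → ℝ) (B C : Matrix ι ι ℝ)
    (hn_int : ∀ i j, Integrable (fun ω => n ω i * n ω j) P)
    (hn_cov : ∀ i j, ∫ ω, n ω i * n ω j ∂P = C i j) :
    ∫ ω, n ω ⬝ᵥ (B *ᵥ n ω) ∂P = Matrix.trace (C * Bᵀ) := by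
  have hterm : ∀ i j, Integrable (fun ω => B i j * (n ω i * n ω j)) P :=
    fun i j => (hn_int i j).const_mul _
  calc ∫ ω, n ω ⬝ᵥ (B *ᵥ n ω) ∂P
      = ∫ ω, ∑ i, ∑ j, B i j * (n ω i * n ω j) ∂P := by
        congr 1
        ext ω
        simp only [dotProduct, Matrix.mulVec, Finset.mul_sum]
        exact Finset.sum_congr rfl fun i _ => Finset.sum_congr rfl fun j _ => by ring
    _ = ∑ i, ∑ j, B i j * C i j := by
        rw [integral_finsetSum _ fun i _ => integrable_finsetSum _ fun j _ => hterm i j]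
        refine Finset.sum_congr rfl fun i _ => ?_
        rw [integral_finsetSum _ fun j _ => hterm i j]
        simp only [integral_const_mul, hn_cov]
    _ = Matrix.trace (C * Bᵀ) := by
        simp only [Matrix.trace, Matrix.diag, Matrix.mul_apply, Matrix.transpose_apply, mul_comm]

theorem consistent_estimator_mse_general
    {H : Type*} [NormedAddCommGroup H] [InnerProductSpace ℝ H]
    {K : ℕ} (g s : Fin K → H)
    (hSG : IsUnit (gramM s g).det)
    {Ω : Type*} [MeasurableSpace Ω] (P : Measure Ω)
    (σ : ℝ)
    (n : Ω → Fin K → ℝ)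
    (hn_int : ∀ i j : Fin K, Integrable (fun ω => n ω i * n ω j) P)
    (hn_cov : ∀ i j : Fin K, ∫ ω, n ω i * n ω j ∂P = σ ^ 2 * ⟪s j, s i⟫_ℝ) :
    (∫ ω, ‖∑ k : Fin K, ((gramM s g)⁻¹ *ᵥ n ω) k • g k‖ ^ 2 ∂P =
        σ ^ 2 * Matrix.trace (gramM s s * (gramM g s)⁻¹ * gramM g g * (gramM s g)⁻¹)) ∧
    ((∀ k : Fin K, s k = g k) →
      ∫ ω, ‖∑ k : Fin K, ((gramM s g)⁻¹ *ᵥ n ω) k • g k‖ ^ 2 ∂P = K * σ ^ 2) := by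
  have hmse : ∫ ω, ‖∑ k : Fin K, ((gramM s g)⁻¹ *ᵥ n ω) k • g k‖ ^ 2 ∂P =
      σ ^ 2 * Matrix.trace (gramM s s * (gramM g s)⁻¹ * gramM g g * (gramM s g)⁻¹) := by
    simp only [norm_sum_smul_sq, Matrix.mulVec_dotProduct_mulVec_mulVec]
    rw [integral_dotProduct_mulVec P n _ (σ ^ 2 • gramM s s) hn_int fun i j => hn_cov i j]
    rw [Matrix.transpose_mul, Matrix.transpose_mul, Matrix.transpose_transpose, gramM_transpose,
      Matrix.transpose_nonsing_inv, gramM_transpose, Matrix.smul_mul, Matrix.trace_smul,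
      smul_eq_mul, Matrix.mul_assoc, Matrix.mul_assoc]
  refine ⟨hmse, fun hsg => ?_⟩
  obtain rfl : s = g := funext hsg
  rw [hmse, Matrix.mul_nonsing_inv _ hSG, Matrix.one_mul, Matrix.mul_nonsing_inv _ hSG,
    Matrix.trace_one, Fintype.card_fin, mul_comm]

/-- MSE of the consistent estimator `x̂ = G (S*G)⁻¹ c`: if `n` is a random
vector with `E[nᵢnⱼ] = σ² (S*S)ᵢⱼ`, then
`E‖G (S*G)⁻¹ n‖² = σ² Tr((S*S)(G*S)⁻¹(G*G)(S*G)⁻¹)`; in particular when `s = g` this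
equals `K σ²`. -/
theorem consistent_estimator_mse
    {H : Type*} [NormedAddCommGroup H] [InnerProductSpace ℝ H]
    {K : ℕ} (g s : Fin K → H)
    (hSG : IsUnit (gramM s g).det)
    {Ω : Type*} [MeasurableSpace Ω] (P : Measure Ω) [IsProbabilityMeasure P]
    (σ : ℝ) (hσ : 0 < σ)
    (n : Ω → Fin K → ℝ)
    (hn_int : ∀ i j : Fin K, Integrable (fun ω => n ω i * n ω j) P)
    (hn_cov : ∀ i j : Fin K, ∫ ω, n ω i * n ω j ∂P = σ ^ 2 * ⟪s j, s i⟫_ℝ) :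
    (∫ ω, ‖∑ k : Fin K, ((gramM s g)⁻¹ *ᵥ n ω) k • g k‖ ^ 2 ∂P =
        σ ^ 2 * Matrix.trace (gramM s s * (gramM g s)⁻¹ * gramM g g * (gramM s g)⁻¹)) ∧
    ((∀ k : Fin K, s k = g k) →
      ∫ ω, ‖∑ k : Fin K, ((gramM s g)⁻¹ *ᵥ n ω) k • g k‖ ^ 2 ∂P = K * σ ^ 2) :=
  consistent_estimator_mse_general g s hSG P σ n hn_int hn_cov
end

section
/- Let σ² > 0 and let λ : ℕ → ℝ be a nonincreasing sequence with λₖ ≥ 0 for all k; set μₖ := λₖ² / (λₖ + σ²). Then for every orthonormal family α⁽¹⁾, …, α⁽ᴺ⁾ of N vectors in ℓ²(ℕ, ℂ), one has Σ_{n=1}^{N} Σ_{k∈ℕ} |αₖ⁽ⁿ⁾|² μₖ ≤ Σ_{k=0}^{N−1} μₖ, and this bound is attained by taking α⁽ⁿ⁾ to be the (n−1)-th standard basis vector of ℓ²(ℕ, ℂ); hence the supremum of Σ_{n=1}^{N} Σ_{k∈ℕ} |αₖ⁽ⁿ⁾|² μₖ over all orthonormal N-families in ℓ²(ℕ, ℂ)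 equals Σ_{k=0}^{N−1} μₖ. -/
/-! With weights `c k = ∑ n, ‖α n k‖ ^ 2`, the objective is `∑' k, c k * μ k`. Bessel's inequality
against the standard basis vector `e k` gives `0 ≤ c k ≤ 1`, and normalisation gives
`∑' k, c k = N`. For such weights and nonincreasing `μ`, the bathtub principle bounds the objective:
against the threshold `t = μ N`, one has `c k * (μ k - t) ≤ μ k - t` for `k < N` and `≤ 0` for
`k ≥ N`. The standard basis vectors put `c` equal to the indicator of `{0, …, N - 1}`. -/

theorem lp.hasSum_norm_sq {ι : Type*} {E : ι → Type*} [∀ i, NormedAddCommGroup (E i)]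
    (f : lp E 2) : HasSum (fun i => ‖f i‖ ^ 2) (‖f‖ ^ 2) := by
  simpa using lp.hasSum_norm (p := 2) (by norm_num) f

section lpScalar

variable {ι 𝕜 : Type*} [RCLike 𝕜]

theorem lp.orthonormal_single_one [DecidableEq ι] :
    Orthonormal 𝕜 (fun i : ι => (lp.single 2 i (1 : 𝕜) : lp (fun _ : ι => 𝕜) 2)) := by
  -- the default Hilbert basis of `ℓ²` has `repr = refl`, so its vectors are the `lp.single`s
  convert (default : HilbertBasis ι 𝕜 (lp (fun _ : ι => 𝕜) 2)).orthonormal using 1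
  funext i
  exact (default : HilbertBasis ι 𝕜 (lp (fun _ : ι => 𝕜) 2)).repr_symm_single i

theorem lp.tsum_norm_single_one_sq_mul [DecidableEq ι] (μ : ι → ℝ) (i : ι) :
    ∑' k, ‖(lp.single 2 i (1 : 𝕜) : lp (fun _ : ι => 𝕜) 2) k‖ ^ 2 * μ k = μ i := by
  rw [tsum_eq_single i fun k hk => by simp [hk]]
  simp

variable {κ : Type*} [Fintype κ] {v : κ → lp (fun _ : ι => 𝕜) 2}

theorem Orthonormal.hasSum_sum_norm_apply_sq (hv : Orthonormal 𝕜 v) :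
    HasSum (fun i => ∑ n, ‖v n i‖ ^ 2) (Fintype.card κ) := by
  have hsum := hasSum_sum fun n (_ : n ∈ Finset.univ) => lp.hasSum_norm_sq (v n)
  simpa [hv.1] using hsum

theorem Orthonormal.sum_norm_apply_sq_le_one (hv : Orthonormal 𝕜 v) (i : ι) :
    ∑ n, ‖v n i‖ ^ 2 ≤ 1 := by
  classical
  have bessel := hv.sum_inner_products_le (s := Finset.univ) (lp.single 2 i (1 : 𝕜))
  simpa [lp.inner_single_right, lp.norm_single] using bessel

end lpScalar

theorem monotoneOn_sq_div_add {c : ℝ} (hc : 0 ≤ c) :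
    MonotoneOn (fun z : ℝ => z ^ 2 / (z + c)) (Set.Ici 0) := by
  intro a (ha : 0 ≤ a) b (hb : 0 ≤ b) hab
  rcases (add_nonneg ha hc).eq_or_lt with hac | hac
  · simp only [← hac, div_zero]
    positivity
  · rw [div_le_div_iff₀ hac (by linarith)]
    nlinarith [mul_nonneg (mul_nonneg ha hb) (sub_nonneg.2 hab),
      mul_nonneg (mul_nonneg hc (add_nonneg ha hb)) (sub_nonneg.2 hab)]

theorem Summable.mul_antitone_of_nonneg {f μ : ℕ → ℝ} (hf : Summable f) (hf0 : ∀ k, 0 ≤ f k)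
    (hμ : Antitone μ) (hμ0 : ∀ k, 0 ≤ μ k) : Summable fun k => f k * μ k :=
  (hf.mul_right (μ 0)).of_nonneg_of_le (fun k => mul_nonneg (hf0 k) (hμ0 k))
    fun k => mul_le_mul_of_nonneg_left (hμ (Nat.zero_le k)) (hf0 k)

theorem tsum_mul_le_sum_range_of_antitone {μ c : ℕ → ℝ} {N : ℕ} (hμ : Antitone μ)
    (hμ0 : ∀ k, 0 ≤ μ k) (hc0 : ∀ k, 0 ≤ c k) (hc1 : ∀ k, c k ≤ 1) (hc : HasSum c N) :
    ∑' k, c k * μ k ≤ ∑ k ∈ Finset.range N, μ k := by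
  set t := μ N
  have hlhs : HasSum (fun k => c k * (μ k - t)) (∑' k, c k * μ k - N * t) := by
    simpa only [mul_sub] using
      (hc.summable.mul_antitone_of_nonneg hc0 hμ hμ0).hasSum.sub (hc.mul_right t)
  have hrhs : HasSum (fun k => if k < N then μ k - t else 0)
      (∑ k ∈ Finset.range N, if k < N then μ k - t else 0) :=
    hasSum_sum_of_ne_finset_zero fun k hk => by simp_all
  rw [Finset.sum_congr rfl fun k hk => if_pos (Finset.mem_range.1 hk)] at hrhs
  have hpointwise : ∀ k, c k * (μ k - t) ≤ if k < N then μ k - t else 0 := by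
    intro k
    split_ifs with hk
    · exact mul_le_of_le_one_left (sub_nonneg.2 (hμ hk.le)) (hc1 k)
    · exact mul_nonpos_of_nonneg_of_nonpos (hc0 k) (sub_nonpos.2 (hμ (not_lt.1 hk)))
  have := hasSum_le hpointwise hlhs hrhs
  simp only [Finset.sum_sub_distrib, Finset.sum_const, Finset.card_range, nsmul_eq_mul] at this
  linarith

theorem Orthonormal.sum_tsum_norm_apply_sq_mul_le {𝕜 κ : Type*} [RCLike 𝕜] [Fintype κ]
    {v : κ → lp (fun _ : ℕ => 𝕜) 2} (hv : Orthonormal 𝕜 v) {μ : ℕ → ℝ} (hμ : Antitone μ)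
    (hμ0 : ∀ k, 0 ≤ μ k) :
    ∑ n, ∑' k, ‖v n k‖ ^ 2 * μ k ≤ ∑ k ∈ Finset.range (Fintype.card κ), μ k := by
  have hsummable (n : κ) : Summable fun k => ‖v n k‖ ^ 2 * μ k :=
    (lp.hasSum_norm_sq (v n)).summable.mul_antitone_of_nonneg (fun k => by positivity) hμ hμ0
  calc ∑ n, ∑' k, ‖v n k‖ ^ 2 * μ k = ∑' k, (∑ n, ‖v n k‖ ^ 2) * μ k := by
        simp only [← Summable.tsum_finsetSum fun n _ => hsummable n, Finset.sum_mul]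
    _ ≤ _ := tsum_mul_le_sum_range_of_antitone hμ hμ0 (fun k => by positivity)
        hv.sum_norm_apply_sq_le_one hv.hasSum_sum_norm_apply_sq

theorem klt_orthonormal_maximization_general
    (σ : ℝ) (lam : ℕ → ℝ) (hmono : Antitone lam) (hnonneg : ∀ k, 0 ≤ lam k)
    (N : ℕ) :
    (∀ α : Fin N → lp (fun _ : ℕ => ℂ) 2, Orthonormal ℂ α →
      ∑ n : Fin N, ∑' k : ℕ, ‖α n k‖ ^ 2 * (lam k ^ 2 / (lam k + σ ^ 2)) ≤
        ∑ k ∈ Finset.range N, lam k ^ 2 / (lam k + σ ^ 2)) ∧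
    (Orthonormal ℂ (fun n : Fin N => (lp.single 2 (n : ℕ) (1 : ℂ) : lp (fun _ : ℕ => ℂ) 2)) ∧
      ∑ n : Fin N, ∑' k : ℕ,
          ‖(lp.single 2 (n : ℕ) (1 : ℂ) : lp (fun _ : ℕ => ℂ) 2) k‖ ^ 2 *
            (lam k ^ 2 / (lam k + σ ^ 2)) =
        ∑ k ∈ Finset.range N, lam k ^ 2 / (lam k + σ ^ 2)) ∧
    IsGreatest
      {x : ℝ | ∃ α : Fin N → lp (fun _ : ℕ => ℂ) 2, Orthonormal ℂ α ∧
        x = ∑ n : Fin N, ∑' k : ℕ, ‖α n k‖ ^ 2 * (lam k ^ 2 / (lam k + σ ^ 2))}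
      (∑ k ∈ Finset.range N, lam k ^ 2 / (lam k + σ ^ 2)) := by
  have hμ : Antitone fun k => lam k ^ 2 / (lam k + σ ^ 2) := fun a b hab =>
    monotoneOn_sq_div_add (sq_nonneg σ) (hnonneg b) (hnonneg a) (hmono hab)
  have hμ0 (k : ℕ) : 0 ≤ lam k ^ 2 / (lam k + σ ^ 2) :=
    div_nonneg (sq_nonneg _) (add_nonneg (hnonneg k) (sq_nonneg σ))
  have hbound (α : Fin N → lp (fun _ : ℕ => ℂ) 2) (hα : Orthonormal ℂ α) :
      ∑ n : Fin N, ∑' k : ℕ, ‖α n k‖ ^ 2 * (lam k ^ 2 / (lam k + σ ^ 2)) ≤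
        ∑ k ∈ Finset.range N, lam k ^ 2 / (lam k + σ ^ 2) := by
    simpa using hα.sum_tsum_norm_apply_sq_mul_le hμ hμ0
  have hsingle : Orthonormal ℂ
      (fun n : Fin N => (lp.single 2 (n : ℕ) (1 : ℂ) : lp (fun _ : ℕ => ℂ) 2)) :=
    lp.orthonormal_single_one.comp _ Fin.val_injective
  have hsingle_value : ∑ n : Fin N, ∑' k : ℕ,
      ‖(lp.single 2 (n : ℕ) (1 : ℂ) : lp (fun _ : ℕ => ℂ) 2) k‖ ^ 2 *
        (lam k ^ 2 / (lam k + σ ^ 2)) = ∑ k ∈ Finset.range N, lam k ^ 2 / (lam k + σ ^ 2) := by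
    simp only [lp.tsum_norm_single_one_sq_mul]
    exact Fin.sum_univ_eq_sum_range (fun k => lam k ^ 2 / (lam k + σ ^ 2)) N
  refine ⟨hbound, ⟨hsingle, hsingle_value⟩, ⟨⟨_, hsingle, hsingle_value.symm⟩, ?_⟩⟩
  rintro x ⟨α, hα, rfl⟩
  exact hbound α hα

/-- Let `σ > 0`, let `λ : ℕ → ℝ` be nonincreasing and nonnegative, and set
`μₖ = λₖ²/(λₖ + σ²)`. Then for every orthonormal family `α⁽¹⁾,…,α⁽ᴺ⁾` in `ℓ²(ℕ, ℂ)` one has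
`Σₙ Σₖ |αₖ⁽ⁿ⁾|² μₖ ≤ Σ_{k<N} μₖ`; the bound is attained by the standard basis vectors; hence
the supremum over all orthonormal `N`-families equals `Σ_{k<N} μₖ`. -/
theorem klt_orthonormal_maximization
    (σ : ℝ) (hσ : 0 < σ) (lam : ℕ → ℝ) (hmono : Antitone lam) (hnonneg : ∀ k, 0 ≤ lam k)
    (N : ℕ) :
    (∀ α : Fin N → lp (fun _ : ℕ => ℂ) 2, Orthonormal ℂ α →
      ∑ n : Fin N, ∑' k : ℕ, ‖α n k‖ ^ 2 * (lam k ^ 2 / (lam k + σ ^ 2)) ≤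
        ∑ k ∈ Finset.range N, lam k ^ 2 / (lam k + σ ^ 2)) ∧
    (Orthonormal ℂ (fun n : Fin N => (lp.single 2 (n : ℕ) (1 : ℂ) : lp (fun _ : ℕ => ℂ) 2)) ∧
      ∑ n : Fin N, ∑' k : ℕ,
          ‖(lp.single 2 (n : ℕ) (1 : ℂ) : lp (fun _ : ℕ => ℂ) 2) k‖ ^ 2 *
            (lam k ^ 2 / (lam k + σ ^ 2)) =
        ∑ k ∈ Finset.range N, lam k ^ 2 / (lam k + σ ^ 2)) ∧
    IsGreatest
      {x : ℝ | ∃ α : Fin N → lp (fun _ : ℕ => ℂ) 2, Orthonormal ℂ α ∧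
        x = ∑ n : Fin N, ∑' k : ℕ, ‖α n k‖ ^ 2 * (lam k ^ 2 / (lam k + σ ^ 2))}
      (∑ k ∈ Finset.range N, lam k ^ 2 / (lam k + σ ^ 2)) :=
  klt_orthonormal_maximization_general σ lam hmono hnonneg N
end
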